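/- Let φ : I → ℝ be smooth, and consider the cylinder S parametrized by Φ(x, z) = (x, φ(z), z) in M_f, with unit normal η = (φ′(z), −ε, 0) and second fundamental form h(X, Y) = g_f(∇_X Y, η) on the basis (Φ_x, Φ_z). Then h(Φ_x, Φ_x) = 0 and h(Φ_x, Φ_z) = 0, so the 2×2 matrix of h in the basis (Φ_x, Φ_z) has determinant zero, and moreover the ambient curvature term g_f(R(Φ_x, Φ_z)Φ_z, Φ_x) vanishes; hence (by the Gauss equation) the cylinder S is flat. -/
import Mathlib


open Matrix

/-- The Walker metric `g_f` of a strict Walker 3-manifold at a point `(x, y, z)`. -/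
noncomputable def gf (ε : ℝ) (f : ℝ → ℝ → ℝ) (y z : ℝ) (u v : Fin 3 → ℝ) : ℝ :=
  u 0 * v 2 + u 2 * v 0 + ε * u 1 * v 1 + f y z * u 2 * v 2

/-- The Christoffel symbols of the strict Walker 3-manifold (indices `x=0,y=1,z=2`). -/
noncomputable def Γf (ε : ℝ) (fy fz : ℝ → ℝ → ℝ) (y z : ℝ) (k i j : Fin 3) : ℝ :=
  if k = 0 ∧ ((i = 1 ∧ j = 2) ∨ (i = 2 ∧ j = 1)) then fy y z / 2
  else if k = 0 ∧ i = 2 ∧ j = 2 then fz y z / 2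
  else if k = 1 ∧ i = 2 ∧ j = 2 then -(ε / 2) * fy y z
  else 0

/-- The coordinate partial derivative `∂_dir Γ^k_{ij}` of the Christoffel symbols. -/
noncomputable def DΓf (ε : ℝ) (fyy fyz fzy fzz : ℝ → ℝ → ℝ) (y z : ℝ)
    (dir k i j : Fin 3) : ℝ :=
  if dir = 1 then Γf ε fyy fzy y z k i j
  else if dir = 2 then Γf ε fyz fzz y z k i j
  else 0

/-- The curvature tensor `R(∂_i, ∂_j)∂_k` of the strict Walker 3-manifold. -/
noncomputable def Rcurv (ε : ℝ) (fy fz fyy fyz fzy fzz : ℝ → ℝ → ℝ) (y z : ℝ)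
    (i j k : Fin 3) : Fin 3 → ℝ := fun l =>
  DΓf ε fyy fyz fzy fzz y z i l j k - DΓf ε fyy fyz fzy fzz y z j l i k +
    ∑ m : Fin 3, (Γf ε fy fz y z l i m * Γf ε fy fz y z m j k -
      Γf ε fy fz y z l j m * Γf ε fy fz y z m i k)

/-- The multilinear extension `R(u, v)w` of the curvature tensor. -/
noncomputable def Rext (ε : ℝ) (fy fz fyy fyz fzy fzz : ℝ → ℝ → ℝ) (y z : ℝ)
    (u v w : Fin 3 → ℝ) : Fin 3 → ℝ := fun l =>
  ∑ i : Fin 3, ∑ j : Fin 3, ∑ k : Fin 3,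
    u i * v j * w k * Rcurv ε fy fz fyy fyz fzy fzz y z i j k l

/-- The covariant derivative `∇_{γ'} ξ` along a curve `γ` in the strict Walker
3-manifold. -/
noncomputable def covD (ε : ℝ) (fy fz : ℝ → ℝ → ℝ) (γ ξ : ℝ → Fin 3 → ℝ) (t : ℝ) :
    Fin 3 → ℝ :=
  ![deriv (fun s => ξ s 0) t
      + (1 / 2) * fy (γ t 1) (γ t 2) *
        (ξ t 1 * deriv (fun s => γ s 2) t + ξ t 2 * deriv (fun s => γ s 1) t)
      + (1 / 2) * fz (γ t 1) (γ t 2) * ξ t 2 * deriv (fun s => γ s 2) t,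
    deriv (fun s => ξ s 1) t
      - (ε / 2) * fy (γ t 1) (γ t 2) * ξ t 2 * deriv (fun s => γ s 2) t,
    deriv (fun s => ξ s 2) t]

/-- For the cylinder `S : Φ(x, z) = (x, φ(z), z)` in `M_f` with unit normal
`η = (φ′(z), −ε, 0)` and second fundamental form `h(X, Y) = g_f(∇_X Y, η)`,
one has `h(Φ_x, Φ_x) = 0`, `h(Φ_x, Φ_z) = 0`, the matrix of `h` in the basis
`(Φ_x, Φ_z)` has determinant zero, and the ambient curvature term
`g_f(R(Φ_x, Φ_z)Φ_z, Φ_x)` vanishes; hence (by the Gauss equation) `S` is flat. -/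
theorem stmt_16 (ε : ℝ) (hε : ε = 1 ∨ ε = -1) (f fy fz fyy fyz fzy fzz : ℝ → ℝ → ℝ)
    (hf : ContDiff ℝ (⊤ : ℕ∞) (Function.uncurry f))
    (hfy : ∀ y z : ℝ, HasDerivAt (fun t => f t z) (fy y z) y)
    (hfz : ∀ y z : ℝ, HasDerivAt (fun t => f y t) (fz y z) z)
    (hfyy : ∀ y z : ℝ, HasDerivAt (fun t => fy t z) (fyy y z) y)
    (hfyz : ∀ y z : ℝ, HasDerivAt (fun t => fy y t) (fyz y z) z)
    (hfzy : ∀ y z : ℝ, HasDerivAt (fun t => fz t z) (fzy y z) y)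
    (hfzz : ∀ y z : ℝ, HasDerivAt (fun t => fz y t) (fzz y z) z)
    (φ : ℝ → ℝ) (hφ : ContDiff ℝ (⊤ : ℕ∞) φ) :
    ∀ x z : ℝ,
      (fun (η Φx Φz : Fin 3 → ℝ) (Dxx Dxz Dzx Dzz : Fin 3 → ℝ) =>
        gf ε f (φ z) z Dxx η = 0 ∧
        gf ε f (φ z) z Dxz η = 0 ∧
        Matrix.det !![gf ε f (φ z) z Dxx η, gf ε f (φ z) z Dxz η;
                      gf ε f (φ z) z Dzx η, gf ε f (φ z) z Dzz η] = 0 ∧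
        gf ε f (φ z) z (Rext ε fy fz fyy fyz fzy fzz (φ z) z Φx Φz Φz) Φx = 0)
      ![deriv φ z, -ε, 0]
      ![1, 0, 0]
      ![0, deriv φ z, 1]
      (covD ε fy fz (fun s => ![s, φ z, z]) (fun _ => ![1, 0, 0]) x)
      (covD ε fy fz (fun s => ![s, φ z, z]) (fun _ => ![0, deriv φ z, 1]) x)
      (covD ε fy fz (fun s => ![x, φ s, s]) (fun _ => ![1, 0, 0]) z)
      (covD ε fy fz (fun s => ![x, φ s, s]) (fun s => ![0, deriv φ s, 1]) z) := by
  intro x z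
  have h1 : gf ε f (φ z) z (covD ε fy fz (fun s => ![s, φ z, z]) (fun _ => ![1, 0, 0]) x) ![deriv φ z, -ε, 0] = 0 := by
    simp [covD, gf]
  have h2 : gf ε f (φ z) z (covD ε fy fz (fun s => ![s, φ z, z]) (fun _ => ![0, deriv φ z, 1]) x) ![deriv φ z, -ε, 0] = 0 := by
    simp [covD, gf]
  refine ⟨h1, h2, ?_, ?_⟩
  · simp [Matrix.det_fin_two, h1, h2]
  · have hR : ∀ j k : Fin 3, Rcurv ε fy fz fyy fyz fzy fzz (φ z) z 0 j k = 0 := by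
      intro j k
      funext l
      simp [Rcurv, DΓf, Γf, Fin.sum_univ_three]
    simp [Rext, gf, Fin.sum_univ_three, hR]
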